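/- arXiv:1404.5981 — 3 statements merged into one kernel-verified Lean document; each statement's English description precedes it below -/
import Mathlib

section
/- Let H be a Hilbert space and μ, ν closed subspaces. If the quantity κ := inf { dist(x,ν)/dist(x, μ ∩ ν) : x ∈ μ, x ∉ ν } is strictly positive, then the subspace μ + ν is closed in H. -/
/-!
Put `M := (μ ⊓ ν)ᗮ ⊓ μ`, so that `μ ⊔ ν = M ⊔ ν`. A vector `u ∈ M` lying outside `ν` is at
distance `‖u‖` from `μ ⊓ ν`, so `κ ‖u‖ ≤ dist(u, ν) ≤ ‖u + v‖` for every `v ∈ ν`; this also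
holds when `u ∈ ν`, since then `u = 0`. Hence `(u, v) ↦ u + v` is antilipschitz on the complete
space `M × ν`, and its range `M ⊔ ν` is closed.
-/

open Metric

namespace Submodule

theorem isClosed_sup_of_mul_norm_le_norm_add
    {𝕜 E : Type*} [NormedField 𝕜] [NormedAddCommGroup E] [NormedSpace 𝕜 E]
    {M N : Submodule 𝕜 E} [CompleteSpace M] [CompleteSpace N] {c : ℝ} (hc : 0 < c)
    (h : ∀ u ∈ M, ∀ v ∈ N, c * ‖u‖ ≤ ‖u + v‖) :
    IsClosed ((M ⊔ N : Submodule 𝕜 E) : Set E) := by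
  set f := M.subtypeL.coprod N.subtypeL
  have hbound : ∀ p : M × N, ‖p‖ ≤ (1 + c⁻¹).toNNReal * ‖f p‖ := by
    rintro ⟨⟨u, hu⟩, ⟨v, hv⟩⟩
    have hu' : ‖u‖ ≤ c⁻¹ * ‖u + v‖ := (le_inv_mul_iff₀ hc).2 (h u hu v hv)
    have hv' : ‖v‖ ≤ ‖u + v‖ + ‖u‖ := by simpa using norm_sub_le (u + v) u
    simp only [Prod.norm_def, coe_norm, f, ContinuousLinearMap.coprod_apply, subtypeL_apply,
      Real.coe_toNNReal _ (by positivity : 0 ≤ 1 + c⁻¹)]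
    refine max_le ?_ ?_ <;> nlinarith [norm_nonneg (u + v), inv_pos.2 hc]
  have hrange : f.range = M ⊔ N := by simp [f, LinearMap.range_coprod]
  rw [← hrange, LinearMap.coe_range]
  exact (f.antilipschitz_of_bound hbound).isClosed_range f.uniformContinuous

variable {H : Type*} [NormedAddCommGroup H] [InnerProductSpace ℝ H]

theorem infDist_eq_norm_of_mem_orthogonal (K : Submodule ℝ H) {u : H} (hu : u ∈ Kᗮ) :
    infDist u K = ‖u‖ := by
  refine le_antisymm ?_ ((le_infDist ⟨0, K.zero_mem⟩).2 fun y hy => ?_)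
  · simpa using infDist_le_dist_of_mem (x := u) K.zero_mem
  · have hpyth := norm_sub_sq_eq_norm_sq_add_norm_sq_real (K.inner_left_of_mem_orthogonal hy hu)
    rw [dist_eq_norm, mul_self_le_mul_self_iff (norm_nonneg _) (norm_nonneg _), hpyth]
    exact le_add_of_nonneg_right (mul_self_nonneg _)

theorem orthogonal_inf_inf_sup_eq_sup (μ ν : Submodule ℝ H) [(μ ⊓ ν).HasOrthogonalProjection] :
    (μ ⊓ ν)ᗮ ⊓ μ ⊔ ν = μ ⊔ ν := by
  conv_rhs => rw [← sup_orthogonal_inf_of_hasOrthogonalProjection (inf_le_left : μ ⊓ ν ≤ μ)]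
  rw [sup_comm (μ ⊓ ν), sup_assoc, sup_eq_right.2 (inf_le_right : μ ⊓ ν ≤ ν)]

noncomputable def infDistRatio (μ ν : Submodule ℝ H) : ℝ :=
  sInf {r : ℝ | ∃ x ∈ μ, x ∉ ν ∧ r = infDist x ν / infDist x (μ ⊓ ν : Submodule ℝ H)}

theorem infDistRatio_le {μ ν : Submodule ℝ H} {x : H} (hxμ : x ∈ μ) (hxν : x ∉ ν) :
    infDistRatio μ ν ≤ infDist x ν / infDist x (μ ⊓ ν : Submodule ℝ H) :=
  csInf_le ⟨0, fun _ ⟨_, _, _, hr⟩ => hr ▸ div_nonneg infDist_nonneg infDist_nonneg⟩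
    ⟨x, hxμ, hxν, rfl⟩

theorem infDistRatio_mul_norm_le_norm_add {μ ν : Submodule ℝ H} {u v : H}
    (hu : u ∈ (μ ⊓ ν)ᗮ ⊓ μ) (hv : v ∈ ν) : infDistRatio μ ν * ‖u‖ ≤ ‖u + v‖ := by
  by_cases huν : u ∈ ν
  · have hu0 : u = 0 := (orthogonal_disjoint (μ ⊓ ν)).le_bot ⟨⟨hu.2, huν⟩, hu.1⟩
    simp [hu0]
  have hu0 : 0 < ‖u‖ := norm_pos_iff.2 fun h => huν (h ▸ ν.zero_mem)
  have hratio := infDistRatio_le hu.2 huν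
  rw [infDist_eq_norm_of_mem_orthogonal _ hu.1, le_div_iff₀ hu0] at hratio
  calc infDistRatio μ ν * ‖u‖ ≤ infDist u ν := hratio
    _ ≤ dist u (-v) := infDist_le_dist_of_mem (ν.neg_mem hv)
    _ = ‖u + v‖ := by rw [dist_eq_norm, sub_neg_eq_add]

end Submodule

theorem sum_closed_of_inf_dist_ratio_pos_general
    {H : Type*} [NormedAddCommGroup H] [InnerProductSpace ℝ H] [CompleteSpace H]
    (μ ν : Submodule ℝ H)
    (hμ : IsClosed (μ : Set H)) (hν : IsClosed (ν : Set H))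
    (hκ : 0 < sInf { r : ℝ | ∃ x ∈ μ, x ∉ ν ∧
      r = Metric.infDist x (ν : Set H) / Metric.infDist x ((μ ⊓ ν : Submodule ℝ H) : Set H) }) :
    IsClosed ((μ ⊔ ν : Submodule ℝ H) : Set H) := by
  have : CompleteSpace (μ ⊓ ν : Submodule ℝ H) := (hμ.inter hν).completeSpace_coe
  have : CompleteSpace ((μ ⊓ ν)ᗮ ⊓ μ : Submodule ℝ H) :=
    ((μ ⊓ ν).isClosed_orthogonal.inter hμ).completeSpace_coe
  have : CompleteSpace ν := hν.completeSpace_coe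
  rw [← Submodule.orthogonal_inf_inf_sup_eq_sup]
  exact Submodule.isClosed_sup_of_mul_norm_le_norm_add (c := Submodule.infDistRatio μ ν) hκ
    fun _ hu _ hv => Submodule.infDistRatio_mul_norm_le_norm_add hu hv

/-- if the infimum
`κ = inf { dist(x,ν)/dist(x,μ∩ν) : x ∈ μ, x ∉ ν }` is strictly positive,
then `μ + ν` is closed. -/
theorem sum_closed_of_inf_dist_ratio_pos
    {H : Type*} [NormedAddCommGroup H] [InnerProductSpace ℝ H] [CompleteSpace H]
    (μ ν : Submodule ℝ H)
    (hμ : IsClosed (μ : Set H)) (hν : IsClosed (ν : Set H))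
    (hne : ∃ x ∈ μ, x ∉ ν)
    (hκ : 0 < sInf { r : ℝ | ∃ x ∈ μ, x ∉ ν ∧
      r = Metric.infDist x (ν : Set H) / Metric.infDist x ((μ ⊓ ν : Submodule ℝ H) : Set H) }) :
    IsClosed ((μ ⊔ ν : Submodule ℝ H) : Set H) :=
  sum_closed_of_inf_dist_ratio_pos_general μ ν hμ hν hκ
end

section
/- Let H be a Hilbert space, ν a closed subspace with orthogonal projection P onto ν, and μ a closed subspace. Suppose there is a constant K > 0 such that ‖x‖ ≤ K ‖x − Px‖ for all x ∈ μ ∩ (μ ∩ ν)^⊥. Then for every x ∈ μ, dist(x, μ ∩ ν) ≤ K ‖x − Px‖ = K dist(x, ν); in particular μ + ν is closed. -/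
/-!
Subtracting from `x ∈ μ` its projection onto `μ ⊓ ν` does not change `x - P x` and lands in
`μ' := (μ ⊓ ν)ᗮ ⊓ μ`, where the hypothesis applies; this is the distance estimate. As
`μ = (μ ⊓ ν) ⊔ μ'` and `μ ⊓ ν ≤ ν`, we have `μ ⊔ ν = μ' ⊔ ν`, the preimage of `Q μ'` under the
projection `Q = 1 - P` onto `νᗮ`. The hypothesis says that `Q` is bounded below on the complete
space `μ'`, so `Q μ'` is closed.
-/

open Metric NNReal

namespace Submodule

variable {𝕜 E F : Type*} [RCLike 𝕜] [NormedAddCommGroup E] [InnerProductSpace 𝕜 E]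

theorem norm_sub_starProjection_eq_infDist (U : Submodule 𝕜 E) [U.HasOrthogonalProjection]
    (x : E) : ‖x - U.starProjection x‖ = infDist x U := by
  simp only [starProjection_minimal, infDist_eq_iInf, dist_eq_norm]
  rfl

theorem infDist_inf_le_mul_norm_sub_starProjection (μ ν : Submodule 𝕜 E)
    [ν.HasOrthogonalProjection] [(μ ⊓ ν).HasOrthogonalProjection] (K : ℝ)
    (hbound : ∀ y ∈ μ, y ∈ (μ ⊓ ν)ᗮ → ‖y‖ ≤ K * ‖y - ν.starProjection y‖) {x : E} (hx : x ∈ μ) :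
    infDist x (μ ⊓ ν : Submodule 𝕜 E) ≤ K * ‖x - ν.starProjection x‖ := by
  set w := (μ ⊓ ν).starProjection x
  have hw : w ∈ μ ⊓ ν := starProjection_apply_mem _ x
  have hPw : ν.starProjection w = w := starProjection_eq_self_iff.2 hw.2
  calc infDist x (μ ⊓ ν : Submodule 𝕜 E) = ‖x - w‖ :=
        ((μ ⊓ ν).norm_sub_starProjection_eq_infDist x).symm
    _ ≤ K * ‖(x - w) - ν.starProjection (x - w)‖ :=
        hbound _ (μ.sub_mem hx hw.1) (sub_starProjection_mem_orthogonal x)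
    _ = K * ‖x - ν.starProjection x‖ := by rw [map_sub, hPw, sub_sub_sub_cancel_right]

theorem sup_eq_orthogonal_inf_sup {W μ ν : Submodule 𝕜 E} [W.HasOrthogonalProjection]
    (hWμ : W ≤ μ) (hWν : W ≤ ν) : μ ⊔ ν = Wᗮ ⊓ μ ⊔ ν := by
  conv_lhs => rw [← sup_orthogonal_inf_of_hasOrthogonalProjection hWμ]
  rw [sup_comm W, sup_assoc, sup_eq_right.2 hWν]

theorem isClosed_map_of_norm_le_mul [NormedAddCommGroup F] [NormedSpace 𝕜 F] (f : E →L[𝕜] F)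
    (p : Submodule 𝕜 E) [CompleteSpace p] (K : ℝ≥0) (h : ∀ x ∈ p, ‖x‖ ≤ K * ‖f x‖) :
    IsClosed ((p.map (f : E →ₗ[𝕜] F) : Submodule 𝕜 F) : Set F) := by
  have hf : AntilipschitzWith K (f ∘L p.subtypeL) :=
    ContinuousLinearMap.antilipschitz_of_bound _ fun x => h x x.2
  rw [map_coe, ← Subtype.range_coe (s := (p : Set E)), ← Set.range_comp]
  exact hf.isClosed_range (f ∘L p.subtypeL).uniformContinuous

theorem isClosed_sup_of_norm_le_mul (μ ν : Submodule 𝕜 E) [ν.HasOrthogonalProjection]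
    [CompleteSpace μ] (K : ℝ≥0) (h : ∀ x ∈ μ, ‖x‖ ≤ K * ‖x - ν.starProjection x‖) :
    IsClosed ((μ ⊔ ν : Submodule 𝕜 E) : Set E) := by
  have hker : LinearMap.ker νᗮ.starProjection.toLinearMap = ν := by
    rw [ker_starProjection, orthogonal_orthogonal]
  rw [← hker, ← comap_map_eq]
  refine (isClosed_map_of_norm_le_mul νᗮ.starProjection μ K ?_).preimage
    νᗮ.starProjection.continuous
  simpa using h

end Submodule

theorem dist_le_and_sum_closed_of_norm_bound_general
    {H : Type*} [NormedAddCommGroup H] [InnerProductSpace ℝ H] [CompleteSpace H]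
    (μ ν : Submodule ℝ H)
    (hμ : IsClosed (μ : Set H)) (hν : IsClosed (ν : Set H))
    [ν.HasOrthogonalProjection]
    (K : ℝ)
    (hbound : ∀ x ∈ μ, x ∈ ((μ ⊓ ν : Submodule ℝ H) : Submodule ℝ H)ᗮ →
      ‖x‖ ≤ K * ‖x - (ν.orthogonalProjectionOnto x : H)‖) :
    (∀ x ∈ μ,
      Metric.infDist x (((μ ⊓ ν : Submodule ℝ H) : Submodule ℝ H) : Set H)
        ≤ K * ‖x - (ν.orthogonalProjectionOnto x : H)‖ ∧
      ‖x - (ν.orthogonalProjectionOnto x : H)‖ = Metric.infDist x (ν : Set H)) ∧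
    IsClosed ((μ ⊔ ν : Submodule ℝ H) : Set H) := by
  have : CompleteSpace (μ ⊓ ν : Submodule ℝ H) := (hμ.inter hν).completeSpace_coe
  refine ⟨fun x hx => ⟨μ.infDist_inf_le_mul_norm_sub_starProjection ν K hbound hx,
    ν.norm_sub_starProjection_eq_infDist x⟩, ?_⟩
  rw [Submodule.sup_eq_orthogonal_inf_sup inf_le_left inf_le_right]
  have : CompleteSpace ((μ ⊓ ν)ᗮ ⊓ μ : Submodule ℝ H) :=
    ((Submodule.isClosed_orthogonal _).inter hμ).completeSpace_coe
  exact Submodule.isClosed_sup_of_norm_le_mul _ ν K.toNNReal fun x hx =>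
    (hbound x hx.2 hx.1).trans (mul_le_mul_of_nonneg_right K.le_coe_toNNReal (norm_nonneg _))

/-- if `‖x‖ ≤ K‖x − Px‖` for all `x ∈ μ ∩ (μ∩ν)^⊥`, where `P` is the
orthogonal projection onto `ν`, then `dist(x, μ∩ν) ≤ K‖x − Px‖ = K·dist(x,ν)` for all
`x ∈ μ`, and `μ + ν` is closed. -/
theorem dist_le_and_sum_closed_of_norm_bound
    {H : Type*} [NormedAddCommGroup H] [InnerProductSpace ℝ H] [CompleteSpace H]
    (μ ν : Submodule ℝ H)
    (hμ : IsClosed (μ : Set H)) (hν : IsClosed (ν : Set H))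
    [ν.HasOrthogonalProjection]
    (K : ℝ) (hK : 0 < K)
    (hbound : ∀ x ∈ μ, x ∈ ((μ ⊓ ν : Submodule ℝ H) : Submodule ℝ H)ᗮ →
      ‖x‖ ≤ K * ‖x - (ν.orthogonalProjectionOnto x : H)‖) :
    (∀ x ∈ μ,
      Metric.infDist x (((μ ⊓ ν : Submodule ℝ H) : Submodule ℝ H) : Set H)
        ≤ K * ‖x - (ν.orthogonalProjectionOnto x : H)‖ ∧
      ‖x - (ν.orthogonalProjectionOnto x : H)‖ = Metric.infDist x (ν : Set H)) ∧
    IsClosed ((μ ⊔ ν : Submodule ℝ H) : Set H) :=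
  dist_le_and_sum_closed_of_norm_bound_general μ ν hμ hν K hbound
end

section
/- Let Ω ⊂ ℝⁿ be a bounded Lipschitz domain, V ∈ C¹ on a neighborhood of Ω̄, λ ∈ ℝ, and for t ∈ (0,1] define D_t(u,u) = t^{n−2} ∫_Ω [|∇u|² + t²(V(tx) − λ)u²] dx on H¹(Ω). Then for fixed u ∈ H¹(Ω), the map t ↦ D_t(u,u) is differentiable, and if u satisfies the Euler–Lagrange relation D_t(u,v) = 0 for all v ∈ H¹(Ω) (Neumann kernel condition), then d/dt D_t(u,u) = t^{n−2} ∫_Ω u² (d/dt)[t²V(tx) − t²λ] dx = t^{n−1} ∫_Ω u² [2(V(tx) − λ) + t x·∇V(tx)] dx; in particular this derivative is strictly negative whenever λ > V(y) + ½ y·∇V(y) for all y ∈ Ω_t and u ≢ 0. -/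
/-!
Write `D(s) = s ^ (n - 2) * G(s)`. Testing the kernel condition with `v = u` gives `G(t) = 0`, so
the product rule leaves only `t ^ (n - 2) * G'(t)`, and `G'` is obtained by differentiating under
the integral sign; only the potential term `s² (V(s x) - λ) u²` depends on `s`, and on the bounded
set `Ω` its `s`-derivative is dominated by a multiple of `u²`. For the sign, at `y = t x` the
bracket `2 (V(y) - λ) + y ⬝ ∇V(y)` is twice `V(y) + ½ y ⬝ ∇V(y) - λ < 0`, so the integral against
`u² ≢ 0` is negative.
-/

open MeasureTheory RealInnerProductSpace

open Bornology Filter Function Metric Set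

theorem ContDiff.continuous_gradient {E : Type*} [NormedAddCommGroup E] [InnerProductSpace ℝ E]
    [CompleteSpace E] {V : E → ℝ} (hV : ContDiff ℝ 1 V) : Continuous (gradient V) :=
  (InnerProductSpace.toDual ℝ E).symm.continuous.comp (hV.continuous_fderiv one_ne_zero)

theorem HasGradientAt.hasDerivAt_comp_smul {E : Type*} [NormedAddCommGroup E]
    [InnerProductSpace ℝ E] [CompleteSpace E] {V : E → ℝ} {g x : E} {s : ℝ}
    (h : HasGradientAt V g (s • x)) : HasDerivAt (fun r : ℝ => V (r • x)) ⟪x, g⟫ s := by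
  have h' := h.hasFDerivAt.comp_hasDerivAt s ((hasDerivAt_id s).smul_const x)
  rw [one_smul, InnerProductSpace.toDual_apply_apply, real_inner_comm] at h'
  exact h'

section Integrals

variable {E : Type*} [NormedAddCommGroup E] [ProperSpace E] [MeasurableSpace E]
  [OpensMeasurableSpace E] {μ : Measure E} {Ω : Set E}

/-- `c'` is bounded on the compact set `closedBall t 1 ×ˢ closure Ω`, so `C * ‖w‖` dominates. -/
theorem hasDerivAt_setIntegral_mul_of_isBounded (hΩ : IsBounded Ω) (hΩm : MeasurableSet Ω)
    {c c' : ℝ → E → ℝ} {w : E → ℝ} (hw : IntegrableOn w Ω μ) (hc : ∀ s, Continuous (c s))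
    (hc' : Continuous (uncurry c')) (hderiv : ∀ s x, HasDerivAt (c · x) (c' s x) s) (t : ℝ) :
    HasDerivAt (fun s => ∫ x in Ω, c s x * w x ∂μ) (∫ x in Ω, c' t x * w x ∂μ) t := by
  have hint : ∀ {f : E → ℝ}, Continuous f → IntegrableOn (fun x => f x * w x) Ω μ :=
    fun hf => hw.continuousOn_mul_of_subset hf.continuousOn hΩ.isCompact_closure hΩm subset_closure
  obtain ⟨C, hC⟩ := ((isCompact_closedBall t 1).prod
    hΩ.isCompact_closure).exists_bound_of_continuousOn hc'.continuousOn
  refine (hasDerivAt_integral_of_dominated_loc_of_deriv_le (bound := fun x => C * ‖w x‖)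
    (closedBall_mem_nhds t one_pos)
    (Eventually.of_forall fun s => (hint (hc s)).aestronglyMeasurable)
    (hint (hc t)) (hint (hc'.comp (Continuous.prodMk_right t))).aestronglyMeasurable ?_
    (hw.norm.const_mul C) (Eventually.of_forall fun x s _ => (hderiv s x).mul_const (w x))).2
  refine ae_restrict_of_forall_mem hΩm fun x hx s hs => ?_
  rw [norm_mul]
  exact mul_le_mul_of_nonneg_right (hC (s, x) ⟨hs, subset_closure hx⟩) (norm_nonneg _)

end Integrals

theorem setIntegral_mul_neg_of_pos {α : Type*} [MeasurableSpace α] {μ : Measure α} {s : Set α}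
    (hs : MeasurableSet s) {f g : α → ℝ} (hf : ∀ x ∈ s, 0 ≤ f x) (hg : ∀ x ∈ s, g x < 0)
    (hfg : IntegrableOn (fun x => f x * g x) s μ) (hpos : 0 < ∫ x in s, f x ∂μ) :
    ∫ x in s, f x * g x ∂μ < 0 := by
  have hnonneg : 0 ≤ᵐ[μ.restrict s] fun x => -(f x * g x) :=
    ae_restrict_of_forall_mem hs fun x hx =>
      neg_nonneg.2 (mul_nonpos_of_nonneg_of_nonpos (hf x hx) (hg x hx).le)
  have hle : ∫ x in s, f x * g x ∂μ ≤ 0 := by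
    simpa [integral_neg] using integral_nonneg_of_ae hnonneg
  refine hle.lt_of_ne fun h0 => hpos.ne' ?_
  have hzero := (integral_eq_zero_iff_of_nonneg_ae hnonneg hfg.neg).1
    (by rw [integral_neg, h0, neg_zero])
  have hf0 : f =ᵐ[μ.restrict s] 0 := by
    filter_upwards [hzero, ae_restrict_mem hs] with x hx hxs
    simpa [(hg x hxs).ne] using hx
  simp [integral_congr_ae hf0]

section Dilation

variable {E : Type*} [NormedAddCommGroup E] [InnerProductSpace ℝ E] [ProperSpace E]
  [MeasurableSpace E] [BorelSpace E] {μ : Measure E} {Ω : Set E}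

theorem hasDerivAt_setIntegral_dilatedForm (hΩ : IsBounded Ω) (hΩm : MeasurableSet Ω)
    {V : E → ℝ} (hV : ContDiff ℝ 1 V) (lam : ℝ) {a w : E → ℝ} (ha : IntegrableOn a Ω μ)
    (hw : IntegrableOn w Ω μ) (t : ℝ) :
    HasDerivAt (fun s => ∫ x in Ω, (a x + s ^ 2 * (V (s • x) - lam) * w x) ∂μ)
      (∫ x in Ω, (2 * t * (V (t • x) - lam) + t ^ 2 * ⟪x, gradient V (t • x)⟫) * w x ∂μ) t := by
  set c : ℝ → E → ℝ := fun s x => s ^ 2 * (V (s • x) - lam)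
  set c' : ℝ → E → ℝ := fun s x => 2 * s * (V (s • x) - lam) + s ^ 2 * ⟪x, gradient V (s • x)⟫
  have hVc := hV.continuous
  have hgradV := hV.continuous_gradient
  have hc : ∀ s, Continuous (c s) := fun s => by fun_prop
  have hc' : Continuous (uncurry c') := by fun_prop
  have hderiv : ∀ s x, HasDerivAt (c · x) (c' s x) s := fun s x => by
    refine ((hasDerivAt_pow 2 s).mul (((hV.differentiable one_ne_zero (s • x)).hasGradientAt
      |>.hasDerivAt_comp_smul).sub_const lam)).congr_deriv ?_
    simp only [c']
    ring
  have hsplit : ∀ s, ∫ x in Ω, (a x + s ^ 2 * (V (s • x) - lam) * w x) ∂μ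
      = (∫ x in Ω, a x ∂μ) + ∫ x in Ω, c s x * w x ∂μ :=
    fun s => integral_add ha (hw.continuousOn_mul_of_subset (hc s).continuousOn
      hΩ.isCompact_closure hΩm subset_closure)
  simp_rw [hsplit]
  exact (hasDerivAt_setIntegral_mul_of_isBounded hΩ hΩm hw hc hc' hderiv t).const_add _

end Dilation

theorem derivative_of_dilated_form_general
    {n : ℕ} (Ω : Set (EuclideanSpace ℝ (Fin n)))
    (hΩopen : IsOpen Ω) (hΩbd : Bornology.IsBounded Ω)
    (V : EuclideanSpace ℝ (Fin n) → ℝ) (hV : ContDiff ℝ 1 V)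
    (lam : ℝ) (t : ℝ) (ht : 0 < t)
    (u : EuclideanSpace ℝ (Fin n) → ℝ) (hu : Differentiable ℝ u)
    (hu2 : Integrable (fun x => u x ^ 2) (volume.restrict Ω))
    (hgrad2 : Integrable (fun x => ‖gradient u x‖ ^ 2) (volume.restrict Ω))
    (hker : ∀ v : EuclideanSpace ℝ (Fin n) → ℝ, Differentiable ℝ v →
      ∫ x in Ω, (⟪gradient u x, gradient v x⟫ + t ^ 2 * (V (t • x) - lam) * u x * v x) = 0) :
    HasDerivAt
      (fun s : ℝ => s ^ ((n : ℤ) - 2) *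
        ∫ x in Ω, (⟪gradient u x, gradient u x⟫ + s ^ 2 * (V (s • x) - lam) * u x ^ 2))
      (t ^ ((n : ℤ) - 1) *
        ∫ x in Ω, u x ^ 2 * (2 * (V (t • x) - lam) + t * ⟪x, gradient V (t • x)⟫)) t ∧
    ((∀ y ∈ (fun x => t • x) '' Ω, V y + (1 / 2) * ⟪y, gradient V y⟫ < lam) →
      0 < ∫ x in Ω, u x ^ 2 →
      t ^ ((n : ℤ) - 1) *
        ∫ x in Ω, u x ^ 2 * (2 * (V (t • x) - lam) + t * ⟪x, gradient V (t • x)⟫) < 0) := by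
  have hΩm := hΩopen.measurableSet
  have hgrad_int : Integrable (fun x => ⟪gradient u x, gradient u x⟫) (volume.restrict Ω) := by
    simpa only [real_inner_self_eq_norm_sq] using hgrad2
  have hG := hasDerivAt_setIntegral_dilatedForm hΩbd hΩm hV lam hgrad_int hu2 t
  have hG0 :
      ∫ x in Ω, (⟪gradient u x, gradient u x⟫ + t ^ 2 * (V (t • x) - lam) * u x ^ 2) = 0 := by
    simpa only [mul_assoc, sq] using hker u hu
  have hG' : ∫ x in Ω, (2 * t * (V (t • x) - lam) + t ^ 2 * ⟪x, gradient V (t • x)⟫) * u x ^ 2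
      = t * ∫ x in Ω, u x ^ 2 * (2 * (V (t • x) - lam) + t * ⟪x, gradient V (t • x)⟫) := by
    rw [← integral_const_mul]
    congr 1 with x
    ring
  refine ⟨?_, fun hlt hpos => ?_⟩
  · refine ((hasDerivAt_zpow ((n : ℤ) - 2) t (Or.inl ht.ne')).mul hG).congr_deriv ?_
    rw [hG0, hG', mul_zero, zero_add, ← mul_assoc, ← zpow_add_one₀ ht.ne',
      show (n : ℤ) - 2 + 1 = n - 1 by ring]
  · have hVc := hV.continuous
    have hgradV := hV.continuous_gradient
    refine mul_neg_of_pos_of_neg (zpow_pos ht _) (setIntegral_mul_neg_of_pos hΩm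
      (fun x _ => sq_nonneg (u x)) (fun x hx => ?_) (IntegrableOn.mul_continuousOn_of_subset hu2
        (by fun_prop) hΩm hΩbd.isCompact_closure subset_closure) hpos)
    have := hlt (t • x) ⟨x, hx, rfl⟩
    rw [real_inner_smul_left] at this
    linarith

/-- for the dilated form
`D_t(u,u) = t^{n−2} ∫_Ω [|∇u|² + t²(V(tx) − λ)u²] dx`, if `u` is in the kernel of
the form `D_t`, then `t ↦ D_t(u,u)` is differentiable with
`d/dt D_t(u,u) = t^{n−1} ∫_Ω u² [2(V(tx) − λ) + t x·∇V(tx)] dx`, and this derivative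
is strictly negative when `λ > V(y) + ½ y·∇V(y)` for all `y ∈ tΩ` and `u ≢ 0`. -/
theorem derivative_of_dilated_form
    {n : ℕ} (Ω : Set (EuclideanSpace ℝ (Fin n)))
    (hΩopen : IsOpen Ω) (hΩbd : Bornology.IsBounded Ω)
    (V : EuclideanSpace ℝ (Fin n) → ℝ) (hV : ContDiff ℝ 1 V)
    (lam : ℝ) (t : ℝ) (ht : 0 < t) (ht1 : t ≤ 1)
    (u : EuclideanSpace ℝ (Fin n) → ℝ) (hu : Differentiable ℝ u)
    (hu2 : Integrable (fun x => u x ^ 2) (volume.restrict Ω))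
    (hgrad2 : Integrable (fun x => ‖gradient u x‖ ^ 2) (volume.restrict Ω))
    (hker : ∀ v : EuclideanSpace ℝ (Fin n) → ℝ, Differentiable ℝ v →
      ∫ x in Ω, (⟪gradient u x, gradient v x⟫ + t ^ 2 * (V (t • x) - lam) * u x * v x) = 0) :
    HasDerivAt
      (fun s : ℝ => s ^ ((n : ℤ) - 2) *
        ∫ x in Ω, (⟪gradient u x, gradient u x⟫ + s ^ 2 * (V (s • x) - lam) * u x ^ 2))
      (t ^ ((n : ℤ) - 1) *
        ∫ x in Ω, u x ^ 2 * (2 * (V (t • x) - lam) + t * ⟪x, gradient V (t • x)⟫)) t ∧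
    ((∀ y ∈ (fun x => t • x) '' Ω, V y + (1 / 2) * ⟪y, gradient V y⟫ < lam) →
      0 < ∫ x in Ω, u x ^ 2 →
      t ^ ((n : ℤ) - 1) *
        ∫ x in Ω, u x ^ 2 * (2 * (V (t • x) - lam) + t * ⟪x, gradient V (t • x)⟫) < 0) :=
  derivative_of_dilated_form_general Ω hΩopen hΩbd V hV lam t ht u hu hu2 hgrad2 hker
end
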